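/- For the rescaled Vaidya metric ĝ, the nonzero Christoffel symbols in coordinates (u, R, θ, φ) = (x⁰, x¹, x², x³) are: Γ⁰₀₀ = -3R²m(u) + R, Γ¹₀₁ = 3R²m(u) - R, Γ¹₀₀ = 6R⁵m(u)² - 5R⁴m(u) + R³m'(u) + R³, Γ²₃₃ = -cos θ sin θ, Γ³₃₂ = cot θ. -/

import Mathlib

noncomputable section

/-- Partial derivative of a scalar function on `ℝ⁴` in the `i`-th coordinate direction. -/
def pd (i : Fin 4) (f : (Fin 4 → ℝ) → ℝ) (x : Fin 4 → ℝ) : ℝ :=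
  fderiv ℝ f x (Pi.single i 1)

/-- Christoffel symbols `Γ^c_{ab}` of the Levi-Civita connection of a metric `g`
with (pointwise) inverse `ginv`, in coordinates. -/
def Christoffel (g ginv : (Fin 4 → ℝ) → Matrix (Fin 4) (Fin 4) ℝ) (c a b : Fin 4)
    (x : Fin 4 → ℝ) : ℝ :=
  (1 / 2) * ∑ d, ginv x c d *
    (pd a (fun y => g y b d) x + pd b (fun y => g y a d) x - pd d (fun y => g y a b) x)

/-- Ricci tensor `R_{bd}` of `g` in coordinates. -/
def Ricci (g ginv : (Fin 4 → ℝ) → Matrix (Fin 4) (Fin 4) ℝ) (b d : Fin 4)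
    (x : Fin 4 → ℝ) : ℝ :=
  (∑ a, (pd a (fun y => Christoffel g ginv a d b y) x
        - pd d (fun y => Christoffel g ginv a a b y) x))
  + ∑ a, ∑ e, (Christoffel g ginv a a e x * Christoffel g ginv e d b x
        - Christoffel g ginv a d e x * Christoffel g ginv e a b x)

/-- Scalar curvature `Scal = g^{bd} R_{bd}`. -/
def scalarCurv (g ginv : (Fin 4 → ℝ) → Matrix (Fin 4) (Fin 4) ℝ) (x : Fin 4 → ℝ) : ℝ :=
  ∑ b, ∑ d, ginv x b d * Ricci g ginv b d x

/-- The rescaled Vaidya metric `ĝ = R²(1-2m(u)R) du² - 2 du dR - dθ² - sin²θ dφ²`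
in coordinates `(u, R, θ, φ) = (x 0, x 1, x 2, x 3)`. -/
def vaidyaHat (m : ℝ → ℝ) (x : Fin 4 → ℝ) : Matrix (Fin 4) (Fin 4) ℝ :=
  !![(x 1) ^ 2 * (1 - 2 * m (x 0) * x 1), -1, 0, 0;
     -1, 0, 0, 0;
     0, 0, -1, 0;
     0, 0, 0, -(Real.sin (x 2)) ^ 2]

/-- The inverse of the rescaled Vaidya metric. -/
def vaidyaHatInv (m : ℝ → ℝ) (x : Fin 4 → ℝ) : Matrix (Fin 4) (Fin 4) ℝ :=
  !![0, -1, 0, 0;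
     -1, -(x 1) ^ 2 * (1 - 2 * m (x 0) * x 1), 0, 0;
     0, 0, -1, 0;
     0, 0, 0, -((Real.sin (x 2)) ^ 2)⁻¹]

/-- The expected Christoffel symbols of the rescaled Vaidya metric: the listed
nonzero components (together with their lower-index symmetric partners), all other
components vanishing. -/
def vaidyaChristoffelExpected (m : ℝ → ℝ) (c a b : Fin 4) (x : Fin 4 → ℝ) : ℝ :=
  if c = 0 ∧ a = 0 ∧ b = 0 then
    -3 * (x 1) ^ 2 * m (x 0) + x 1
  else if c = 1 ∧ ((a = 0 ∧ b = 1) ∨ (a = 1 ∧ b = 0)) then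
    3 * (x 1) ^ 2 * m (x 0) - x 1
  else if c = 1 ∧ a = 0 ∧ b = 0 then
    6 * (x 1) ^ 5 * (m (x 0)) ^ 2 - 5 * (x 1) ^ 4 * m (x 0)
      + (x 1) ^ 3 * deriv m (x 0) + (x 1) ^ 3
  else if c = 2 ∧ a = 3 ∧ b = 3 then
    -Real.cos (x 2) * Real.sin (x 2)
  else if c = 3 ∧ ((a = 3 ∧ b = 2) ∨ (a = 2 ∧ b = 3)) then
    Real.cos (x 2) / Real.sin (x 2)
  else 0


lemma pd_const (i : Fin 4) (c : ℝ) (x : Fin 4 → ℝ) : pd i (fun _ => c) x = 0 := by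
  simp [pd]

lemma pd_g00 (m : ℝ → ℝ) (hm : ContDiff ℝ (⊤ : ℕ∞) m) (x : Fin 4 → ℝ) (i : Fin 4) :
    pd i (fun y => (y 1) ^ 2 * (1 - 2 * m (y 0) * y 1)) x
      = if i = 0 then -2 * (x 1) ^ 3 * deriv m (x 0)
        else if i = 1 then 2 * x 1 - 6 * m (x 0) * (x 1) ^ 2 else 0 := by
  have h0 : HasFDerivAt (fun y : Fin 4 → ℝ => y 0)
      (ContinuousLinearMap.proj 0 : (Fin 4 → ℝ) →L[ℝ] ℝ) x := hasFDerivAt_apply 0 x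
  have h1 : HasFDerivAt (fun y : Fin 4 → ℝ => y 1)
      (ContinuousLinearMap.proj 1 : (Fin 4 → ℝ) →L[ℝ] ℝ) x := hasFDerivAt_apply 1 x
  have hm0 : HasFDerivAt (fun y : Fin 4 → ℝ => m (y 0))
      (deriv m (x 0) • (ContinuousLinearMap.proj 0 : (Fin 4 → ℝ) →L[ℝ] ℝ)) x :=
    ((hm.differentiable (by simp)).differentiableAt.hasDerivAt).comp_hasFDerivAt x h0
  have hfull := (h1.mul h1).mul (((hm0.const_mul 2).mul h1).const_sub 1)
  have hd : fderiv ℝ (fun y : Fin 4 → ℝ => y 1 * y 1 * (1 - 2 * m (y 0) * y 1)) x = _ := hfull.fderiv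
  simp only [pd, pow_two, hd]
  fin_cases i <;>
    simp [ContinuousLinearMap.add_apply, ContinuousLinearMap.smul_apply,
      ContinuousLinearMap.proj_apply, ContinuousLinearMap.neg_apply, Pi.single_apply] <;>
    ring

lemma pd_g33 (x : Fin 4 → ℝ) (i : Fin 4) :
    pd i (fun y => -Real.sin (y 2) ^ 2) x
      = if i = 2 then -(2 * Real.sin (x 2) * Real.cos (x 2)) else 0 := by
  have h2 : HasFDerivAt (fun y : Fin 4 → ℝ => y 2)
      (ContinuousLinearMap.proj 2 : (Fin 4 → ℝ) →L[ℝ] ℝ) x := hasFDerivAt_apply 2 x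
  have hs : HasFDerivAt (fun y : Fin 4 → ℝ => Real.sin (y 2))
      (Real.cos (x 2) • (ContinuousLinearMap.proj 2 : (Fin 4 → ℝ) →L[ℝ] ℝ)) x :=
    by have := (Real.hasDerivAt_sin (x 2)).comp_hasFDerivAt x h2; exact this
  have hfull := (hs.mul hs).neg
  have hd : fderiv ℝ (fun y : Fin 4 → ℝ => -(Real.sin (y 2) * Real.sin (y 2))) x = _ := hfull.fderiv
  simp only [pd, pow_two, hd]
  fin_cases i <;>
    simp [ContinuousLinearMap.smul_apply, ContinuousLinearMap.proj_apply,
      ContinuousLinearMap.neg_apply, Pi.single_apply] <;> ring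

/-- the Christoffel symbols of the rescaled Vaidya metric are exactly
`Γ⁰₀₀ = -3R²m(u)+R`, `Γ¹₀₁ = 3R²m(u)-R`, `Γ¹₀₀ = 6R⁵m(u)²-5R⁴m(u)+R³m'(u)+R³`,
`Γ²₃₃ = -cos θ sin θ`, `Γ³₃₂ = cot θ` (and symmetric partners), all others zero. -/
theorem christoffel_rescaled_vaidya (m : ℝ → ℝ) (hm : ContDiff ℝ (⊤ : ℕ∞) m)
    (x : Fin 4 → ℝ) (hR : 0 < x 1) (hθ : Real.sin (x 2) ≠ 0) (c a b : Fin 4) :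
    Christoffel (vaidyaHat m) (vaidyaHatInv m) c a b x
      = vaidyaChristoffelExpected m c a b x := by
  have h00 := pd_g00 m hm x
  have h33 := pd_g33 x
  fin_cases c <;> fin_cases a <;> fin_cases b <;>
    simp [Christoffel, vaidyaHat, vaidyaHatInv, vaidyaChristoffelExpected,
      Fin.sum_univ_four, h00, h33, pd_const] <;>
    field_simp <;> ring
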